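/- arXiv:1412.5414 — 3 statements merged into one kernel-verified Lean document; each statement's English description precedes it below -/
import Mathlib

section
/- Let a ∈ (0,1), M > 0, and Φ : [0,∞) → [0,∞) be C¹ with Φ(0)=0, Φ > 0 on (0,∞), satisfying s·Φ'(s) ≤ (1/a)·Φ(s) for all s > 0. Let β = Φ⁻¹ and j(r) = ∫₀ʳ β(r') dr'. Then for all w₁, w₂ ∈ [0, M], |j(Φ(w₁)) - j(Φ(w₂))| ≤ (Φ(M)/a)·|w₁ - w₂|. -/
open Set intervalIntegral MeasureTheory
open scoped Interval

/-!
The substitution `r = Φ s` turns `j (Φ w)` into `∫₀ʷ s Φ'(s) ds`; for a monotone `Φ` this change of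
variables holds for any integrand, so no regularity of `β` is needed. On `(0, M]` monotonicity and
the structural bound give `0 ≤ s Φ'(s) ≤ Φ(M) / a`, whence the Lipschitz estimate.
-/

theorem integral_leftInvOn_eq_integral_mul_deriv {f f' g : ℝ → ℝ} {a b : ℝ} (hab : a ≤ b)
    (hf' : ∀ x ∈ Icc a b, HasDerivWithinAt f (f' x) (Icc a b) x)
    (hf : MonotoneOn f (Icc a b)) (hg : LeftInvOn g f (Icc a b)) :
    ∫ r in f a..f b, g r = ∫ x in a..b, x * f' x := by
  have hfc : ContinuousOn f (Icc a b) := fun x hx => (hf' x hx).continuousWithinAt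
  rw [integral_of_le (hf (left_mem_Icc.2 hab) (right_mem_Icc.2 hab) hab), integral_of_le hab,
    ← integral_Icc_eq_integral_Ioc, ← integral_Icc_eq_integral_Ioc,
    ← hfc.image_Icc_of_monotoneOn hab hf,
    integral_image_eq_integral_deriv_smul_of_monotoneOn measurableSet_Icc hf' hf]
  refine setIntegral_congr_fun measurableSet_Icc fun x hx => ?_
  rw [smul_eq_mul, hg hx, mul_comm]

theorem MonotoneOn.deriv_nonneg_of_mem_Ici {f : ℝ → ℝ} {c x : ℝ} (hf : MonotoneOn f (Ici c))
    (hd : DifferentiableAt ℝ f x) (hx : c ≤ x) : 0 ≤ deriv f x := by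
  rw [← hd.derivWithin (uniqueDiffOn_Ici c x hx)]
  exact hf.derivWithin_nonneg

theorem abs_mul_deriv_le_div {Φ : ℝ → ℝ} {a M x : ℝ} (ha : 0 < a) (hΦ : MonotoneOn Φ (Ici 0))
    (hd : DifferentiableAt ℝ Φ x) (hstruct : x * deriv Φ x ≤ 1 / a * Φ x) (hx : x ∈ Ioc 0 M) :
    |x * deriv Φ x| ≤ Φ M / a :=
  calc |x * deriv Φ x| = x * deriv Φ x :=
        abs_of_nonneg (mul_nonneg hx.1.le (hΦ.deriv_nonneg_of_mem_Ici hd hx.1.le))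
    _ ≤ 1 / a * Φ x := hstruct
    _ ≤ 1 / a * Φ M :=
        mul_le_mul_of_nonneg_left (hΦ hx.1.le (hx.1.le.trans hx.2) hx.2) (one_div_nonneg.2 ha.le)
    _ = Φ M / a := one_div_mul_eq_div a (Φ M)

theorem stmt_10_general (a M : ℝ) (ha : a ∈ Set.Ioo (0:ℝ) 1)
    (Φ β : ℝ → ℝ)
    (hC1 : ContDiff ℝ 1 Φ) (h0 : Φ 0 = 0)
    (hmono : StrictMonoOn Φ (Set.Ici 0))
    (hstruct : ∀ s > (0:ℝ), s * deriv Φ s ≤ (1 / a) * Φ s)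
    (hinv : ∀ s ≥ (0:ℝ), β (Φ s) = s)
    (j : ℝ → ℝ)
    (hj : ∀ r ≥ (0:ℝ), j r = ∫ r' in (0:ℝ)..r, β r') :
    ∀ w₁ ∈ Set.Icc (0:ℝ) M, ∀ w₂ ∈ Set.Icc (0:ℝ) M,
      |j (Φ w₁) - j (Φ w₂)| ≤ (Φ M / a) * |w₁ - w₂| := by
  have hd : Differentiable ℝ Φ := hC1.differentiable one_ne_zero
  have hΦ : MonotoneOn Φ (Ici 0) := hmono.monotoneOn
  have hj_eq : ∀ w ∈ Icc (0:ℝ) M, j (Φ w) = ∫ x in (0:ℝ)..w, x * deriv Φ x := fun w hw => by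
    rw [hj _ (h0 ▸ hΦ self_mem_Ici hw.1 hw.1)]
    simpa only [h0] using integral_leftInvOn_eq_integral_mul_deriv hw.1
      (fun x _ => (hd x).hasDerivAt.hasDerivWithinAt) (hΦ.mono Icc_subset_Ici_self)
      fun x hx => hinv x hx.1
  intro w₁ hw₁ w₂ hw₂
  have hcont : Continuous fun x => x * deriv Φ x :=
    continuous_id.mul (hC1.continuous_deriv le_rfl)
  rw [hj_eq w₁ hw₁, hj_eq w₂ hw₂,
    integral_interval_sub_left (hcont.intervalIntegrable _ _) (hcont.intervalIntegrable _ _),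
    ← Real.norm_eq_abs]
  refine norm_integral_le_of_norm_le_const fun x hx => ?_
  have hx' : x ∈ Ioc 0 M := ⟨(le_min hw₂.1 hw₁.1).trans_lt hx.1, hx.2.trans (max_le hw₂.2 hw₁.2)⟩
  exact abs_mul_deriv_le_div ha.1 hΦ (hd x) (hstruct x hx'.1) hx'

theorem stmt_10 (a M : ℝ) (ha : a ∈ Set.Ioo (0:ℝ) 1) (hM : 0 < M)
    (Φ β : ℝ → ℝ)
    (hC1 : ContDiff ℝ 1 Φ) (h0 : Φ 0 = 0)
    (hpos : ∀ s > (0:ℝ), 0 < Φ s)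
    (hmono : StrictMonoOn Φ (Set.Ici 0))
    (hstruct : ∀ s > (0:ℝ), s * deriv Φ s ≤ (1 / a) * Φ s)
    (hinv : ∀ s ≥ (0:ℝ), β (Φ s) = s)
    (j : ℝ → ℝ)
    (hj : ∀ r ≥ (0:ℝ), j r = ∫ r' in (0:ℝ)..r, β r') :
    ∀ w₁ ∈ Set.Icc (0:ℝ) M, ∀ w₂ ∈ Set.Icc (0:ℝ) M,
      |j (Φ w₁) - j (Φ w₂)| ≤ (Φ M / a) * |w₁ - w₂| :=
  stmt_10_general a M ha Φ β hC1 h0 hmono hstruct hinv j hj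
end

section
/- Let φ ∈ (0,1), p ∈ (0,1), β(r) = φ·r + (1-φ)·r^p for r ≥ 0, and Φ = β⁻¹. Then for every M > 0 there exists ā > 0 such that s·Φ'(s)/Φ(s) ≥ 1 + ā for all s ∈ (0, M]. -/
/-!
For `r > 0`, `r β'(r) = φ r + (1 - φ) p r ^ p = β r - (1 - φ)(1 - p) r ^ p`, and
`r β'(r) = r ^ p (φ r ^ (1 - p) + (1 - φ) p) ≤ K r ^ p` with `K = φ R ^ (1 - p) + (1 - φ) p`
whenever `r ≤ R`. Hence `β r / (r β'(r)) ≥ 1 + (1 - φ)(1 - p) / K` on `(0, R]`. With `s = β r`,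
the inverse function rule gives `s Φ'(s) / Φ s = β r / (r β'(r))`, and `s ≤ M` means `r ≤ Φ M`.
-/

open Real Set Filter Topology

noncomputable section

namespace Freundlich

variable {φ p r R s : ℝ}

def freundlich (φ p r : ℝ) : ℝ := φ * r + (1 - φ) * r ^ p

def freundlichDeriv (φ p r : ℝ) : ℝ := φ + (1 - φ) * p * r ^ (p - 1)

def freundlichGap (φ p R : ℝ) : ℝ := (1 - φ) * (1 - p) / (φ * R ^ (1 - p) + (1 - φ) * p)

theorem freundlich_zero (hp : p ≠ 0) : freundlich φ p 0 = 0 := by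
  simp [freundlich, zero_rpow hp]

theorem continuous_freundlich (hp : 0 ≤ p) : Continuous (freundlich φ p) :=
  (continuous_const.mul continuous_id).add
    (continuous_const.mul (continuous_rpow_const hp))

theorem strictMonoOn_freundlich (hφ0 : 0 < φ) (hφ1 : φ ≤ 1) (hp : 0 ≤ p) :
    StrictMonoOn (freundlich φ p) (Ici 0) := by
  intro r₁ hr₁ r₂ _ hlt
  have hpow : r₁ ^ p ≤ r₂ ^ p := rpow_le_rpow hr₁ hlt.le hp
  unfold freundlich
  nlinarith

theorem exists_freundlich_eq (hφ0 : 0 < φ) (hφ1 : φ ≤ 1) (hp : 0 < p) (hs : 0 ≤ s) :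
    ∃ r, 0 ≤ r ∧ freundlich φ p r = s := by
  have hsφ : 0 ≤ s / φ := div_nonneg hs hφ0.le
  have hle : s ≤ freundlich φ p (s / φ) := by
    have : 0 ≤ (1 - φ) * (s / φ) ^ p := mul_nonneg (by linarith) (rpow_nonneg hsφ p)
    rw [freundlich, mul_div_cancel₀ s hφ0.ne']
    linarith
  obtain ⟨r, hr, hrs⟩ := intermediate_value_Icc hsφ (continuous_freundlich hp.le).continuousOn
    (show s ∈ Icc (freundlich φ p 0) _ from ⟨(freundlich_zero hp.ne').symm ▸ hs, hle⟩)
  exact ⟨r, hr.1, hrs⟩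

theorem nonneg_of_freundlich_leftInverse {Φ : ℝ → ℝ} (hφ0 : 0 < φ) (hφ1 : φ ≤ 1) (hp : 0 < p)
    (hinv : ∀ r ≥ (0:ℝ), Φ (freundlich φ p r) = r) (hs : 0 ≤ s) : 0 ≤ Φ s := by
  obtain ⟨r, hr, rfl⟩ := exists_freundlich_eq hφ0 hφ1 hp hs
  rwa [hinv r hr]

theorem hasDerivAt_freundlich (hr : 0 < r) :
    HasDerivAt (freundlich φ p) (freundlichDeriv φ p r) r := by
  have hpow := (hasDerivAt_rpow_const (p := p) (Or.inl hr.ne')).const_mul (1 - φ)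
  rw [show freundlichDeriv φ p r = φ * 1 + (1 - φ) * (p * r ^ (p - 1)) by
    rw [freundlichDeriv]; ring]
  exact ((hasDerivAt_id r).const_mul φ).add hpow

theorem freundlichDeriv_pos (hφ0 : 0 ≤ φ) (hφ1 : φ < 1) (hp : 0 < p) (hr : 0 < r) :
    0 < freundlichDeriv φ p r := by
  have : 0 < 1 - φ := by linarith
  have := rpow_pos_of_pos hr (p - 1)
  unfold freundlichDeriv
  positivity

theorem mul_freundlichDeriv (hr : 0 < r) :
    r * freundlichDeriv φ p r = φ * r + (1 - φ) * p * r ^ p := by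
  have hpow : r * r ^ (p - 1) = r ^ p := by
    rw [mul_comm, ← rpow_add_one hr.ne', sub_add_cancel]
  rw [freundlichDeriv, ← hpow]
  ring

theorem mul_freundlichDeriv_le (hφ0 : 0 ≤ φ) (hp1 : p ≤ 1) (hr : 0 < r) (hrR : r ≤ R) :
    r * freundlichDeriv φ p r ≤ (φ * R ^ (1 - p) + (1 - φ) * p) * r ^ p := by
  have hsplit : r = r ^ (1 - p) * r ^ p := by
    rw [← rpow_add hr, sub_add_cancel, rpow_one]
  have hmono : r ^ (1 - p) ≤ R ^ (1 - p) := rpow_le_rpow hr.le hrR (by linarith)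
  have hrp : 0 ≤ r ^ p := rpow_nonneg hr.le p
  rw [mul_freundlichDeriv hr]
  nth_rewrite 1 [hsplit]
  nlinarith [mul_le_mul_of_nonneg_right hmono hrp]

theorem freundlichGap_pos (hφ0 : 0 ≤ φ) (hφ1 : φ < 1) (hp0 : 0 < p) (hp1 : p < 1) (hR : 0 ≤ R) :
    0 < freundlichGap φ p R := by
  have : 0 < 1 - φ := by linarith
  have : 0 < 1 - p := by linarith
  have := rpow_nonneg hR (1 - p)
  unfold freundlichGap
  positivity

theorem one_add_freundlichGap_le (hφ0 : 0 ≤ φ) (hφ1 : φ < 1) (hp0 : 0 < p) (hp1 : p ≤ 1)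
    (hr : 0 < r) (hrR : r ≤ R) :
    1 + freundlichGap φ p R ≤ freundlich φ p r / (r * freundlichDeriv φ p r) := by
  set K := φ * R ^ (1 - p) + (1 - φ) * p
  set D := r * freundlichDeriv φ p r with hD
  have hK : 0 < K := by
    have : 0 < 1 - φ := by linarith
    have := rpow_nonneg (hr.le.trans hrR) (1 - p)
    positivity
  have hc : 0 ≤ (1 - φ) * (1 - p) / K := div_nonneg (mul_nonneg (by linarith) (by linarith)) hK.le
  have hβ : freundlich φ p r = D + (1 - φ) * (1 - p) * r ^ p := by
    rw [hD, mul_freundlichDeriv hr, freundlich]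
    ring
  have hDpos : 0 < D := mul_pos hr (freundlichDeriv_pos hφ0 hφ1 hp0 hr)
  rw [le_div_iff₀ hDpos, hβ, freundlichGap]
  calc (1 + (1 - φ) * (1 - p) / K) * D
      = D + (1 - φ) * (1 - p) / K * D := by ring
    _ ≤ D + (1 - φ) * (1 - p) / K * (K * r ^ p) :=
        add_le_add_right (mul_le_mul_of_nonneg_left (mul_freundlichDeriv_le hφ0 hp1 hr hrR) hc) _
    _ = D + (1 - φ) * (1 - p) * r ^ p := by field_simp

end Freundlich

end

open Freundlich

theorem stmt_11 (p φ : ℝ) (hp : p ∈ Set.Ioo (0:ℝ) 1) (hφ : φ ∈ Set.Ioo (0:ℝ) 1)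
    (β Φ : ℝ → ℝ)
    (hβ : ∀ r ≥ (0:ℝ), β r = φ * r + (1 - φ) * r ^ p)
    (hinv₁ : ∀ r ≥ (0:ℝ), Φ (β r) = r)
    (hinv₂ : ∀ s ≥ (0:ℝ), β (Φ s) = s)
    (hdiff : ∀ s > (0:ℝ), DifferentiableAt ℝ Φ s) :
    ∀ M > (0:ℝ), ∃ abar > (0:ℝ), ∀ s ∈ Set.Ioc (0:ℝ) M,
      1 + abar ≤ s * deriv Φ s / Φ s := by
  obtain ⟨hp0, hp1⟩ := hp
  obtain ⟨hφ0, hφ1⟩ := hφ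
  have hβf : ∀ r ≥ (0:ℝ), β r = freundlich φ p r := hβ
  have hΦ_nonneg : ∀ s ≥ (0:ℝ), 0 ≤ Φ s := fun s =>
    nonneg_of_freundlich_leftInverse hφ0 hφ1.le hp0 fun r hr => hβf r hr ▸ hinv₁ r hr
  have hβΦ : ∀ s ≥ (0:ℝ), freundlich φ p (Φ s) = s := fun s hs =>
    (hβf _ (hΦ_nonneg s hs)).symm.trans (hinv₂ s hs)
  intro M hM
  refine ⟨freundlichGap φ p (Φ M), freundlichGap_pos hφ0.le hφ1 hp0 hp1 (hΦ_nonneg M hM.le),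
    fun s ⟨hs0, hsM⟩ => ?_⟩
  have hr : 0 < Φ s := (hΦ_nonneg s hs0.le).lt_of_ne fun h => hs0.ne' <| by
    rw [← hβΦ s hs0.le, ← h, freundlich_zero hp0.ne']
  have hrR : Φ s ≤ Φ M := by
    rwa [← (strictMonoOn_freundlich hφ0 hφ1.le hp0.le).le_iff_le (hΦ_nonneg s hs0.le)
      (hΦ_nonneg M hM.le), hβΦ s hs0.le, hβΦ M hM.le]
  have hβ' : HasDerivAt β (freundlichDeriv φ p (Φ s)) (Φ s) :=
    (hasDerivAt_freundlich hr).congr_of_eventuallyEq <|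
      eventually_of_mem (Ioi_mem_nhds hr) fun r hr => hβf r hr.le
  have hΦ' : deriv Φ s = (freundlichDeriv φ p (Φ s))⁻¹ :=
    (hβ'.of_local_left_inverse (hdiff s hs0).continuousAt
      (freundlichDeriv_pos hφ0.le hφ1 hp0 hr).ne'
      (eventually_of_mem (Ioi_mem_nhds hs0) fun t ht => hinv₂ t ht.le)).deriv
  calc 1 + freundlichGap φ p (Φ M)
      ≤ freundlich φ p (Φ s) / (Φ s * freundlichDeriv φ p (Φ s)) :=
        one_add_freundlichGap_le hφ0.le hφ1 hp0 hp1.le hr hrR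
    _ = s * deriv Φ s / Φ s := by rw [hΦ', hβΦ s hs0.le]; ring
end

section
/- Let N ≥ 1, p ∈ (0,1), φ ∈ [0,1), and for z ∈ ℝ^N with z ≠ 0 define b(z) = (φ + (1-φ)·|z|₁^(p-1))·z, where |z|₁ = Σᵢ|zᵢ|, and b(0) = 0. Then |b(z)|₁ = β(|z|₁) where β(r) = φr + (1-φ)r^p, and b : ℝ^N → ℝ^N is a bijection with inverse given by b⁻¹(u) = (Φ(|u|₁)/|u|₁)·u for u ≠ 0 and b⁻¹(0) = 0, where Φ = β⁻¹. -/
/-!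
Both `b` and the proposed inverse are radial maps `z ↦ c(|z|₁) • z` with a positive scale `c`,
and a radial map multiplies the ℓ¹ norm by its scale. Composing two radial maps is therefore
again a rescaling, and it is the identity as soon as the scales cancel; for `b` and `b⁻¹` this
cancellation is exactly `Φ ∘ β = id` and `β ∘ Φ = id`. The only analytic input is that `Φ` is
positive on `(0, ∞)`, which follows from the intermediate value theorem for `β`.
-/

open Real Set Filter

section Radial

variable {ι : Type*} [Fintype ι]

lemma sum_abs_pos_of_ne_zero {z : ι → ℝ} (hz : z ≠ 0) : 0 < ∑ i, |z i| := by
  obtain ⟨i, hi⟩ := Function.ne_iff.mp hz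
  exact Finset.sum_pos' (fun j _ => abs_nonneg _) ⟨i, Finset.mem_univ i, abs_pos.mpr hi⟩

lemma sum_abs_smul (c : ℝ) (z : ι → ℝ) : ∑ i, |(c • z) i| = |c| * ∑ i, |z i| := by
  simp only [Pi.smul_apply, smul_eq_mul, abs_mul, Finset.mul_sum]

noncomputable def radial (c : ℝ → ℝ) (z : ι → ℝ) : ι → ℝ :=
  if z = 0 then 0 else c (∑ i, |z i|) • z

lemma sum_abs_radial (c : ℝ → ℝ) (z : ι → ℝ) :
    ∑ i, |radial c z i| = |c (∑ i, |z i|)| * ∑ i, |z i| := by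
  by_cases hz : z = 0
  · simp [radial, hz]
  · rw [radial, if_neg hz, sum_abs_smul]

lemma sum_abs_radial_of_abs_mul_eq {c β : ℝ → ℝ} (hβ0 : β 0 = 0)
    (hcβ : ∀ r > 0, |c r| * r = β r) (z : ι → ℝ) : ∑ i, |radial c z i| = β (∑ i, |z i|) := by
  rw [sum_abs_radial]
  rcases (Finset.sum_nonneg fun i _ => abs_nonneg (z i)).eq_or_lt with hr | hr
  · rw [← hr, mul_zero, hβ0]
  · exact hcβ _ hr

lemma radial_radial {c d : ℝ → ℝ} (hc : ∀ r > 0, 0 < c r)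
    (hdc : ∀ r > 0, d (c r * r) * c r = 1) (z : ι → ℝ) : radial d (radial c z) = z := by
  by_cases hz : z = 0
  · simp [radial, hz]
  have hr := sum_abs_pos_of_ne_zero hz
  have hcz : radial c z ≠ 0 := by
    rw [radial, if_neg hz]
    exact smul_ne_zero (hc _ hr).ne' hz
  rw [radial, if_neg hcz, sum_abs_radial, abs_of_pos (hc _ hr), radial, if_neg hz, smul_smul,
    hdc _ hr, one_smul]

end Radial

section Freundlich

variable {p φ : ℝ}

lemma freundlich_scale_mul_self {r : ℝ} (hr : 0 < r) :
    (φ + (1 - φ) * r ^ (p - 1)) * r = φ * r + (1 - φ) * r ^ p := by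
  rw [rpow_sub_one hr.ne']
  field_simp

lemma freundlich_scale_pos (hφ0 : 0 ≤ φ) (hφ1 : φ < 1) {r : ℝ} (hr : 0 < r) :
    0 < φ + (1 - φ) * r ^ (p - 1) :=
  add_pos_of_nonneg_of_pos hφ0 (mul_pos (by linarith) (rpow_pos_of_pos hr _))

lemma freundlich_surjOn (hp : 0 < p) (hφ0 : 0 ≤ φ) (hφ1 : φ < 1) :
    SurjOn (fun r => φ * r + (1 - φ) * r ^ p) (Ici 0) (Ici 0) := by
  have hcont : Continuous fun r : ℝ => φ * r + (1 - φ) * r ^ p := by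
    have := continuous_rpow_const hp.le
    fun_prop
  have htop : Tendsto (fun r : ℝ => φ * r + (1 - φ) * r ^ p) atTop atTop :=
    Tendsto.zero_eventuallyLE_add_atTop
      ((eventually_ge_atTop 0).mono fun r hr => mul_nonneg hφ0 hr)
      ((tendsto_rpow_atTop hp).const_mul_atTop (by linarith))
  have := intermediate_value_Ici (a := 0) hcont.continuousOn htop
  rwa [mul_zero, zero_rpow hp.ne', mul_zero, add_zero] at this

end Freundlich

lemma pos_of_leftInvOn_of_surjOn {β Φ : ℝ → ℝ} (hinv : LeftInvOn Φ β (Ici 0))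
    (hsurj : SurjOn β (Ici 0) (Ici 0)) (hβ0 : β 0 = 0) {s : ℝ} (hs : 0 < s) : 0 < Φ s := by
  obtain ⟨r, hr, rfl⟩ := hsurj hs.le
  rw [hinv hr]
  refine lt_of_le_of_ne hr ?_
  rintro rfl
  exact hs.ne' hβ0

theorem stmt_12_general (N : ℕ) (p φ : ℝ)
    (hp : p ∈ Set.Ioo (0:ℝ) 1) (hφ : φ ∈ Set.Ico (0:ℝ) 1)
    (β Φ : ℝ → ℝ)
    (hβ : ∀ r ≥ (0:ℝ), β r = φ * r + (1 - φ) * r ^ p)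
    (hinv₁ : ∀ r ≥ (0:ℝ), Φ (β r) = r)
    (hinv₂ : ∀ s ≥ (0:ℝ), β (Φ s) = s)
    (b binv : (Fin N → ℝ) → (Fin N → ℝ))
    (hb : ∀ z : Fin N → ℝ, b z =
      if z = 0 then 0 else (φ + (1 - φ) * (∑ i, |z i|) ^ (p - 1)) • z)
    (hbinv : ∀ u : Fin N → ℝ, binv u =
      if u = 0 then 0 else (Φ (∑ i, |u i|) / (∑ i, |u i|)) • u) :
    (∀ z : Fin N → ℝ, (∑ i, |b z i|) = β (∑ i, |z i|)) ∧
      Function.Bijective b ∧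
      (∀ u : Fin N → ℝ, b (binv u) = u) ∧
      (∀ z : Fin N → ℝ, binv (b z) = z) := by
  obtain ⟨hp0, -⟩ := hp
  obtain ⟨hφ0, hφ1⟩ := hφ
  set B : ℝ → ℝ := fun r => φ + (1 - φ) * r ^ (p - 1)
  obtain rfl : b = radial B := funext hb
  obtain rfl : binv = radial fun s => Φ s / s := funext hbinv
  have hB : ∀ r > 0, 0 < B r := fun r => freundlich_scale_pos hφ0 hφ1
  have hBβ : ∀ r > 0, B r * r = β r := fun r hr => by
    rw [hβ r hr.le, freundlich_scale_mul_self hr]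
  have hβ0 : β 0 = 0 := by rw [hβ 0 le_rfl, zero_rpow hp0.ne']; ring
  have hΦ : ∀ s > 0, 0 < Φ s := fun s =>
    pos_of_leftInvOn_of_surjOn hinv₁
      ((freundlich_surjOn hp0 hφ0 hφ1).congr fun r hr => (hβ r hr).symm) hβ0
  have hright : ∀ u : Fin N → ℝ, radial B (radial (fun s => Φ s / s) u) = u :=
    radial_radial (fun s hs => div_pos (hΦ s hs) hs) fun s hs => by
      rw [div_mul_cancel₀ _ hs.ne', ← mul_div_assoc, hBβ _ (hΦ s hs), hinv₂ s hs.le,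
        div_self hs.ne']
  have hleft : ∀ z : Fin N → ℝ, radial (fun s => Φ s / s) (radial B z) = z :=
    radial_radial hB fun r hr => by
      rw [hBβ r hr, hinv₁ r hr.le, ← hBβ r hr]
      field_simp [(hB r hr).ne', hr.ne']
  refine ⟨sum_abs_radial_of_abs_mul_eq hβ0 fun r hr => by rw [abs_of_pos (hB r hr), hBβ r hr],
    Function.bijective_iff_has_inverse.2 ⟨_, hleft, hright⟩, hright, hleft⟩

theorem stmt_12 (N : ℕ) (hN : 1 ≤ N) (p φ : ℝ)
    (hp : p ∈ Set.Ioo (0:ℝ) 1) (hφ : φ ∈ Set.Ico (0:ℝ) 1)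
    (β Φ : ℝ → ℝ)
    (hβ : ∀ r ≥ (0:ℝ), β r = φ * r + (1 - φ) * r ^ p)
    (hinv₁ : ∀ r ≥ (0:ℝ), Φ (β r) = r)
    (hinv₂ : ∀ s ≥ (0:ℝ), β (Φ s) = s)
    (b binv : (Fin N → ℝ) → (Fin N → ℝ))
    (hb : ∀ z : Fin N → ℝ, b z =
      if z = 0 then 0 else (φ + (1 - φ) * (∑ i, |z i|) ^ (p - 1)) • z)
    (hbinv : ∀ u : Fin N → ℝ, binv u =
      if u = 0 then 0 else (Φ (∑ i, |u i|) / (∑ i, |u i|)) • u) :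
    (∀ z : Fin N → ℝ, (∑ i, |b z i|) = β (∑ i, |z i|)) ∧
      Function.Bijective b ∧
      (∀ u : Fin N → ℝ, b (binv u) = u) ∧
      (∀ z : Fin N → ℝ, binv (b z) = z) :=
  stmt_12_general N p φ hp hφ β Φ hβ hinv₁ hinv₂ b binv hb hbinv
end
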